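/- Let b ∈ ℕ³, b₁ = b − e_i, and a = b₁ − e_i or a = b₁ − e_j, and suppose K^b I is ⟨ij,ik,jk⟩, K^(b₁) I is ⟨ij,k⟩, and K^a I is ⟨i,j⟩. Let λ = (a, b₁, b) ∈ Λ(a,b). Then the degree-1 contribution of λ to the canonical sylvan matrix is: D_{i,ij}^{a,b,λ} = (−1)^{j,ij}/4, D_{j,ij}^{a,b,λ} = (−1)^{i,ij}/4, and D_{v,ik}^{a,b,λ} = D_{v,jk}^{a,b,λ} = 0 for v ∈ {i,j}. -/

import Mathlib

/-!
Along `λ` every ingredient of a hedgerow is forced. `K^b I` is a hollow triangle, so `B̃₁ = 0`: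
its only stake set is `∅` and every edge is its own hedge rim. In `K^(b₁) I` the boundaries are
spanned by `∂(ij)`, so the stake sets are `{i}` and `{j}` and the only shrubbery is `{ij}`; in
`K^a I` the shrubberies are `{i}` and `{j}`. Hence `Δ = 1 · 2 · 1 · 2 = 4`.

A fence from `τ` passes through the stake `τ ∖ i` of `K^(b₁) I`. If `l ∈ τ` this is neither `{i}`
nor `{j}`, so there is no fence. For `τ = ij` it forces the stake `{j}`, and the cycle link at
the bottom forces the shrubbery `{d₀}` of `K^a I`. The single remaining fence has weight
`∂(ij)` at `ij ∖ d₀` times the coefficient of `v` in the circuit `(ij ∖ d₀) − d₀`, which is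
`(−1)^{j,ij}` for `v = i` and `(−1)^{i,ij}` for `v = j`.
-/

open Classical

noncomputable section

namespace Sylvan

/-- Exponent vectors in three variables. -/
abbrev V3 := Fin 3 → ℕ

/-- The `i`-th standard basis vector. -/
def stdVec (i : Fin 3) : V3 := fun j => if j = i then 1 else 0

/-- A monomial ideal, identified with its (upward closed) set of exponent vectors. -/
def IsMonomialIdeal (I : Set V3) : Prop :=
  ∀ ⦃c d : V3⦄, c ∈ I → (∀ i, c i ≤ d i) → d ∈ I

/-- The 0-1 indicator vector of a squarefree face. -/
def ind (τ : Finset (Fin 3)) : V3 := fun i => if i ∈ τ then 1 else 0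

/-- The Koszul simplicial complex of `I` in degree `b`:
faces `τ` with `b ≥ τ` and `x^(b-τ) ∈ I`. -/
def K (I : Set V3) (b : V3) : Set (Finset (Fin 3)) :=
  {τ | (∀ i, ind τ i ≤ b i) ∧ (fun i => b i - ind τ i) ∈ I}

/-- `x^a` is a minimal monomial generator of `I`. -/
def IsMinGen (I : Set V3) (a : V3) : Prop :=
  a ∈ I ∧ ∀ c ∈ I, (∀ i, c i ≤ a i) → c = a

/-- Reduced simplicial chains: formal `k`-linear combinations of faces
(the empty face included). -/
abbrev Ch (k : Type) [Field k] := Finset (Fin 3) →₀ k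

variable (k : Type) [Field k]

/-- The sign `(-1)^(position of v in σ)`. -/
def esgn (v : Fin 3) (σ : Finset (Fin 3)) : ℤ :=
  (-1 : ℤ) ^ (σ.filter (fun u => u < v)).card

/-- The boundary of a single face. -/
def bd (σ : Finset (Fin 3)) : Ch k :=
  ∑ v ∈ σ, Finsupp.single (σ.erase v) ((esgn v σ : ℤ) : k)

/-- The (reduced) simplicial boundary operator. -/
def bdry : Ch k →ₗ[k] Ch k :=
  Finsupp.lsum k fun σ => LinearMap.toSpanSingleton k (Ch k) (bd k σ)

/-- `coeffSign k v σ` is the coefficient of `σ \ {v}` in `∂σ`,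
i.e. the sign `(-1)^{v,σ}` of the paper. -/
def coeffSign (v : Fin 3) (σ : Finset (Fin 3)) : k :=
  bdry k (Finsupp.single σ (1:k)) (σ.erase v)

/-- Faces of cardinality `c` (dimension `c-1`) of a simplicial complex. -/
def faces (Kc : Set (Finset (Fin 3))) (c : ℕ) : Set (Finset (Fin 3)) :=
  {σ | σ ∈ Kc ∧ σ.card = c}

/-- Basis chains attached to a set of faces. -/
def sset (A : Set (Finset (Fin 3))) : Set (Ch k) :=
  (fun σ => Finsupp.single σ (1:k)) '' A

/-- The chain group `C̃_{c-1}(K;k)`, as the span of its card-`c` faces. -/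
def chains (Kc : Set (Finset (Fin 3))) (c : ℕ) : Submodule k (Ch k) :=
  Submodule.span k (sset k (faces Kc c))

/-- The boundaries `B̃_{c-1}(K;k) = ∂ C̃_c(K;k)`, sitting among card-`c` chains. -/
def bdries (Kc : Set (Finset (Fin 3))) (c : ℕ) : Submodule k (Ch k) :=
  (chains k Kc (c+1)).map (bdry k)

/-- A shrubbery in dimension `c-1` (faces of cardinality `c`): a set `T` of card-`c`
faces whose boundaries form a basis of `∂ C̃_{c-1}(K;k)`. -/
def IsShrubbery (Kc : Set (Finset (Fin 3))) (c : ℕ) (T : Finset (Finset (Fin 3))) : Prop :=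
  (T : Set (Finset (Fin 3))) ⊆ faces Kc c ∧
  LinearIndependent k
    (fun σ : (T : Set (Finset (Fin 3))) => bdry k (Finsupp.single (σ : Finset (Fin 3)) (1:k))) ∧
  Submodule.span k ((fun σ => bdry k (Finsupp.single σ (1:k))) '' (T : Set (Finset (Fin 3)))) =
    (chains k Kc c).map (bdry k)

/-- A stake set in dimension `c-1` (faces of cardinality `c`): a set `S` of card-`c`
faces whose complement maps to a basis of `C̃/B̃`. -/
def IsStakeSet (Kc : Set (Finset (Fin 3))) (c : ℕ) (S : Finset (Finset (Fin 3))) : Prop :=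
  (S : Set (Finset (Fin 3))) ⊆ faces Kc c ∧
  Submodule.span k (sset k (faces Kc c \ (S : Set (Finset (Fin 3))))) ⊓ bdries k Kc c = ⊥ ∧
  Submodule.span k (sset k (faces Kc c \ (S : Set (Finset (Fin 3))))) ⊔ bdries k Kc c =
    chains k Kc c

/-- The circuit `ζ(τ)` of a face `τ` with respect to a shrubbery `T`:
the unique cycle of the form `τ - t` with `t ∈ span T`. -/
def circuit (T : Finset (Finset (Fin 3))) (τ : Finset (Fin 3)) : Ch k :=
  if h : ∃! z : Ch k, bdry k z = 0 ∧
      Finsupp.single τ (1:k) - z ∈ Submodule.span k (sset k (T : Set (Finset (Fin 3))))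
  then h.exists.choose else 0

/-- The shrub `s(σ)` of a stake `σ` with respect to a hedge `(S,T)`:
the unique chain in `span T` whose boundary has coefficient `1` on `σ` and `0`
on all other stakes. -/
def shrub (S T : Finset (Finset (Fin 3))) (σ : Finset (Fin 3)) : Ch k :=
  if h : ∃! s : Ch k, s ∈ Submodule.span k (sset k (T : Set (Finset (Fin 3)))) ∧
      bdry k s σ = 1 ∧ ∀ σ' ∈ S, σ' ≠ σ → bdry k s σ' = 0
  then h.exists.choose else 0

/-- The hedge rim `r(τ)` of a face `τ` with respect to a stake set `S`:
the unique chain supported outside `S` with `τ - r(τ)` a boundary. -/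
def hedgeRim (Kc : Set (Finset (Fin 3))) (c : ℕ) (S : Finset (Finset (Fin 3)))
    (τ : Finset (Fin 3)) : Ch k :=
  if h : ∃! r : Ch k,
      r ∈ Submodule.span k (sset k (faces Kc c \ (S : Set (Finset (Fin 3))))) ∧
      Finsupp.single τ (1:k) - r ∈ bdries k Kc c
  then h.exists.choose else 0

/-- The points of the saturated decreasing lattice path from `pt a d n` down to `a`
encoded by the list of directions `d` (read from `a` upwards). -/
def pt (a : V3) {n : ℕ} (d : Fin n → Fin 3) (m : ℕ) : V3 :=
  fun i => a i + ∑ m' ∈ Finset.range m, (if h : m' < n then stdVec (d ⟨m', h⟩) i else 0)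

/-- The data of a hedgerow: `(Sb, S, T, Ta)`. -/
abbrev HRData (n : ℕ) :=
  Finset (Finset (Fin 3)) × (Fin (n+1) → Finset (Finset (Fin 3))) ×
    (Fin (n+1) → Finset (Finset (Fin 3))) × Finset (Finset (Fin 3))

/-- A hedgerow in homological dimension `c-1` along the lattice path from `pt a d n`
down to `a`: a stake set in the Koszul complex at the top, a hedge at each interior
lattice point, and a shrubbery at the bottom.  (Unused components are pinned to `∅`.) -/
def IsHedgerow (I : Set V3) (a : V3) {n : ℕ} (d : Fin n → Fin 3) (c : ℕ)
    (h : HRData n) : Prop :=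
  IsStakeSet k (K I (pt a d n)) c h.1 ∧
  (∀ m : Fin (n+1), 0 < (m:ℕ) → (m:ℕ) < n →
    IsStakeSet k (K I (pt a d m)) (c-1) (h.2.1 m) ∧
    IsShrubbery k (K I (pt a d m)) c (h.2.2.1 m)) ∧
  (∀ m : Fin (n+1), ((m:ℕ) = 0 ∨ (m:ℕ) = n) → h.2.1 m = ∅ ∧ h.2.2.1 m = ∅) ∧
  IsShrubbery k (K I a) (c-1) h.2.2.2

/-- `Δ_{c-1,λ} I`: the number of hedgerows along the lattice path. -/
def Delta (I : Set V3) (a : V3) {n : ℕ} (d : Fin n → Fin 3) (c : ℕ) : ℕ :=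
  Nat.card {h : HRData n // IsHedgerow k I a d c h}

/-- The data of a chain-link fence: a hedgerow together with the faces `τ_ℓ` and
`σ_ℓ` (indexed here by the lattice point `pt a d m`, so `τ_ℓ = tau (n-ℓ)` and
`σ_ℓ = sig (n-ℓ)`). -/
abbrev FData (n : ℕ) :=
  HRData n × (Fin (n+1) → Finset (Fin 3)) × (Fin (n+1) → Finset (Fin 3))

/-- A chain-link fence from the card-`c` face `τtop` of the Koszul complex at the top
of the lattice path to the card-`(c-1)` face `σbot` of the Koszul complex at the
bottom. -/
def IsFence (I : Set V3) (a : V3) {n : ℕ} (d : Fin n → Fin 3) (c : ℕ)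
    (σbot τtop : Finset (Fin 3)) (f : FData n) : Prop :=
  IsHedgerow k I a d c f.1 ∧
  (∀ m : Fin (n+1), 0 < (m:ℕ) → f.2.1 m ∈ faces (K I (pt a d m)) c) ∧
  (∀ m : Fin (n+1), (m:ℕ) < n → f.2.2 m ∈ faces (K I (pt a d m)) (c-1)) ∧
  f.2.1 0 = ∅ ∧ f.2.2 (Fin.last n) = ∅ ∧
  hedgeRim k (K I (pt a d n)) c f.1.1 τtop (f.2.1 (Fin.last n)) ≠ 0 ∧
  (∀ m : Fin n, f.2.2 m.castSucc = (f.2.1 m.succ).erase (d m)) ∧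
  (∀ m : Fin (n+1), 0 < (m:ℕ) → (m:ℕ) < n →
    f.2.2 m ∈ f.1.2.1 m ∧
    shrub k (f.1.2.1 m) (f.1.2.2.1 m) (f.2.2 m) (f.2.1 m) ≠ 0) ∧
  circuit k f.1.2.2.2 (f.2.2 0) σbot ≠ 0

/-- The weight of a chain-link fence: the product of the boundary-link coefficient,
the chain-link coefficients, the containment coefficients, and the cycle-link
coefficient. -/
def weight (I : Set V3) (a : V3) {n : ℕ} (d : Fin n → Fin 3) (c : ℕ)
    (σbot τtop : Finset (Fin 3)) (f : FData n) : k :=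
  hedgeRim k (K I (pt a d n)) c f.1.1 τtop (f.2.1 (Fin.last n)) *
  (∏ m : Fin (n+1), if 0 < (m:ℕ) ∧ (m:ℕ) < n
      then shrub k (f.1.2.1 m) (f.1.2.2.1 m) (f.2.2 m) (f.2.1 m) else 1) *
  (∏ m : Fin n, bdry k (Finsupp.single (f.2.1 m.succ) (1:k)) (f.2.2 m.castSucc)) *
  circuit k f.1.2.2.2 (f.2.2 0) σbot

/-- `D_{σ,τ}^{a,b,λ}`: the contribution of the single lattice path `λ` (encoded by
its direction sequence `d`) to the canonical sylvan matrix entry. -/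
def Dpath (I : Set V3) (a : V3) {n : ℕ} (d : Fin n → Fin 3) (c : ℕ)
    (σbot τtop : Finset (Fin 3)) : k :=
  ((Delta k I a d c : k))⁻¹ *
    ∑ᶠ f ∈ {f : FData n | IsFence k I a d c σbot τtop f}, weight k I a d c σbot τtop f

/-- `|b - a|`, the common length of all saturated decreasing lattice paths. -/
def nlen (a b : V3) : ℕ := ∑ i, (b i - a i)

/-- The canonical sylvan matrix entry `D_{σ,τ}^{a,b}`: a sum over all saturated
decreasing lattice paths from `b` to `a`. -/
def D (I : Set V3) (a b : V3) (c : ℕ) (σbot τtop : Finset (Fin 3)) : k :=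
  ∑ᶠ d ∈ {d : Fin (nlen a b) → Fin 3 | pt a d (nlen a b) = b},
    Dpath k I a d c σbot τtop

/-- `K` has exactly the set `F` as facets, i.e. it is the downward closure of `F`. -/
def hasFacets (Kc F : Set (Finset (Fin 3))) : Prop :=
  Kc = {σ | ∃ f ∈ F, σ ⊆ f}

/-- `dim_k H̃₀(K;k) ≠ 0`: some reduced 0-cycle is not a boundary. -/
def H0nontrivial (Kc : Set (Finset (Fin 3))) : Prop :=
  ¬ (chains k Kc 1 ⊓ LinearMap.ker (bdry k) ≤ bdries k Kc 1)



lemma dite_existsUnique_eq {α : Type*} [Zero α] {P : α → Prop} [Decidable (∃! x, P x)] {x : α}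
    (hx : P x) (huniq : ∀ y, P y → y = x) :
    (if h : ∃! y, P y then h.exists.choose else 0) = x := by
  rw [dif_pos ⟨x, hx, huniq⟩]
  exact huniq _ (Classical.choose_spec _)

section Chains

variable {k : Type} [Field k]

lemma span_sset (A : Set (Finset (Fin 3))) :
    Submodule.span k (sset k A) = Finsupp.supported k k A :=
  (Finsupp.supported_eq_span_single k A).symm

lemma bdry_single (σ : Finset (Fin 3)) : bdry k (Finsupp.single σ 1) = bd k σ := by
  simp [bdry]

lemma bd_singleton (v : Fin 3) : bd k {v} = Finsupp.single ∅ 1 := by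
  simp [bd, esgn, Finset.filter_singleton]

lemma erase_pair_left {u v : Fin 3} (huv : u ≠ v) : ({u, v} : Finset (Fin 3)).erase u = {v} :=
  Finset.erase_insert (by simpa using huv)

lemma erase_pair_right {u v : Fin 3} (huv : u ≠ v) : ({u, v} : Finset (Fin 3)).erase v = {u} := by
  rw [Finset.pair_comm, erase_pair_left huv.symm]

lemma bd_pair {u v : Fin 3} (huv : u ≠ v) :
    bd k {u, v} = Finsupp.single {v} (coeffSign k u {u, v}) +
      Finsupp.single {u} (coeffSign k v {u, v}) := by
  have h : bd k {u, v} = Finsupp.single {v} ((esgn u {u, v} : ℤ) : k) +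
      Finsupp.single {u} ((esgn v {u, v} : ℤ) : k) := by
    rw [bd, Finset.sum_pair huv, erase_pair_left huv, erase_pair_right huv]
  have hne : ({u} : Finset (Fin 3)) ≠ {v} := by simpa using huv
  simp only [coeffSign, bdry_single, h, erase_pair_left huv, erase_pair_right huv,
    Finsupp.add_apply, Finsupp.single_eq_same, Finsupp.single_eq_of_ne hne,
    Finsupp.single_eq_of_ne hne.symm, add_zero, zero_add]

lemma coeffSign_pair_swap {u v : Fin 3} (huv : u ≠ v) :
    coeffSign k v {u, v} = -coeffSign k u {u, v} := by
  have hne : ({u} : Finset (Fin 3)) ≠ {v} := by simpa using huv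
  simp only [coeffSign, bdry_single, erase_pair_left huv, erase_pair_right huv, bd,
    Finset.sum_pair huv, Finsupp.add_apply, Finsupp.single_eq_same, Finsupp.single_eq_of_ne hne,
    Finsupp.single_eq_of_ne hne.symm, add_zero, zero_add, esgn]
  rcases huv.lt_or_gt with h | h <;>
    simp [Finset.filter_insert, Finset.filter_singleton, h, h.not_gt]

lemma coeffSign_pair_ne_zero {u v : Fin 3} (huv : u ≠ v) : coeffSign k u {u, v} ≠ 0 := by
  simp [coeffSign, bdry_single, erase_pair_left huv, bd, Finset.sum_pair huv,
    erase_pair_right huv, huv, esgn]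

end Chains

section Complexes

variable {k : Type} [Field k] {Kc F : Set (Finset (Fin 3))} {c : ℕ}

lemma mem_faces_of_hasFacets (h : hasFacets Kc F) {f σ : Finset (Fin 3)} (hf : f ∈ F)
    (hσ : σ ⊆ f) : σ ∈ faces Kc σ.card := by
  subst h
  exact ⟨⟨f, hf, hσ⟩, rfl⟩

lemma pair_mem_faces_of_hasFacets (h : hasFacets Kc F) {u w : Fin 3} (huw : u ≠ w)
    (hF : {u, w} ∈ F) : {u, w} ∈ faces Kc 2 :=
  Finset.card_pair huw ▸ mem_faces_of_hasFacets h hF subset_rfl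

lemma faces_eq_of_hasFacets (h : hasFacets Kc F) (hF : ∀ f ∈ F, f.card ≤ c) :
    faces Kc c = {f ∈ F | f.card = c} := by
  subst h
  ext σ
  constructor
  · rintro ⟨⟨f, hf, hσf⟩, hσ⟩
    obtain rfl := Finset.eq_of_subset_of_card_le hσf (hσ ▸ hF f hf)
    exact ⟨hf, hσ⟩
  · rintro ⟨hσ, hc⟩
    exact ⟨⟨σ, hσ, subset_rfl⟩, hc⟩

lemma chains_eq_supported : chains k Kc c = Finsupp.supported k k (faces Kc c) :=
  span_sset _

lemma bdries_eq_bot_of_hasFacets (h : hasFacets Kc F) (hF : ∀ f ∈ F, f.card ≤ c) :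
    bdries k Kc c = ⊥ := by
  have hempty : faces Kc (c + 1) = ∅ := by
    rw [faces_eq_of_hasFacets h fun f hf => (hF f hf).trans c.le_succ]
    ext f
    simpa using fun hf => (hF f hf).trans_lt c.lt_succ_self |>.ne
  simp [bdries, chains_eq_supported, hempty]

lemma map_bdry_chains_of_faces_eq_singleton {τ : Finset (Fin 3)} (hf : faces Kc c = {τ}) :
    (chains k Kc c).map (bdry k) = Submodule.span k {bd k τ} := by
  rw [chains, hf, sset, Set.image_singleton, Submodule.map_span, Set.image_singleton,
    bdry_single]

end Complexes

section StakeSets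

variable {k : Type} [Field k] {Kc : Set (Finset (Fin 3))} {c : ℕ}

lemma isStakeSet_iff_of_bdries_eq_bot (hB : bdries k Kc c = ⊥) {S : Finset (Finset (Fin 3))} :
    IsStakeSet k Kc c S ↔ S = ∅ := by
  constructor
  · rintro ⟨hS, -, hsup⟩
    rw [hB, sup_bot_eq, span_sset] at hsup
    refine Finset.eq_empty_of_forall_notMem fun σ hσ => ?_
    have hmem : Finsupp.single σ (1 : k) ∈ chains k Kc c := by
      rw [chains_eq_supported]
      exact Finsupp.single_mem_supported k 1 (hS hσ)
    rw [← hsup, Finsupp.mem_supported'] at hmem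
    simpa using hmem σ fun h => h.2 hσ
  · rintro rfl
    simp [IsStakeSet, hB, chains]

lemma setOf_isStakeSet_of_bdries_eq_bot (hB : bdries k Kc c = ⊥) :
    {S | IsStakeSet k Kc c S} = {∅} :=
  Set.ext fun _ => isStakeSet_iff_of_bdries_eq_bot hB

lemma IsStakeSet.exists_eq_singleton {b : Ch k} (hb : b ∈ chains k Kc c) (hb0 : b ≠ 0)
    (hB : bdries k Kc c = k ∙ b) {S : Finset (Finset (Fin 3))} (hS : IsStakeSet k Kc c S) :
    ∃ σ ∈ faces Kc c, b σ ≠ 0 ∧ S = {σ} := by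
  rw [chains_eq_supported, Finsupp.mem_supported'] at hb
  obtain ⟨hSF, hinf, hsup⟩ := hS
  rw [hB, span_sset] at hinf hsup
  rw [chains_eq_supported] at hsup
  obtain ⟨σ, hσS, hbσ⟩ : ∃ σ ∈ S, b σ ≠ 0 := by
    by_contra! hcon
    refine hb0 ((Submodule.eq_bot_iff _).1 hinf b ⟨?_, Submodule.mem_span_singleton_self b⟩)
    rw [SetLike.mem_coe, Finsupp.mem_supported']
    intro ρ hρ
    by_cases hρS : ρ ∈ S
    exacts [hcon ρ hρS, hb ρ fun h => hρ ⟨h, hρS⟩]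
  refine ⟨σ, hSF hσS, hbσ, Finset.eq_singleton_iff_unique_mem.2 ⟨hσS, fun τ hτS => ?_⟩⟩
  by_contra hτσ
  -- Write `τ = y + t • b` with `y` vanishing on `S`: evaluating at `σ` gives `t = 0`,
  -- and then evaluating at `τ` gives `1 = 0`.
  have hτ : Finsupp.single τ (1 : k) ∈ Finsupp.supported k k (faces Kc c) :=
    Finsupp.single_mem_supported k 1 (hSF hτS)
  rw [← hsup, Submodule.mem_sup] at hτ
  obtain ⟨y, hy, z, hz, hyz⟩ := hτ
  obtain ⟨t, rfl⟩ := Submodule.mem_span_singleton.1 hz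
  rw [Finsupp.mem_supported'] at hy
  have hyS : ∀ ρ ∈ S, y ρ = 0 := fun ρ hρ => hy ρ fun h => h.2 hρ
  have hσ := congrArg (· σ) hyz
  have hτ := congrArg (· τ) hyz
  simp only [Finsupp.add_apply, Finsupp.smul_apply, smul_eq_mul, hyS σ hσS, hyS τ hτS,
    zero_add, Finsupp.single_eq_same, Finsupp.single_eq_of_ne (Ne.symm hτσ)] at hσ hτ
  rw [(mul_eq_zero.1 hσ).resolve_right hbσ, zero_mul] at hτ
  exact zero_ne_one hτ

lemma isStakeSet_singleton {b : Ch k} (hb : b ∈ chains k Kc c) (hB : bdries k Kc c = k ∙ b)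
    {σ : Finset (Fin 3)} (hσ : σ ∈ faces Kc c) (hbσ : b σ ≠ 0) : IsStakeSet k Kc c {σ} := by
  rw [chains_eq_supported, Finsupp.mem_supported'] at hb
  simp only [IsStakeSet, hB, span_sset, chains_eq_supported]
  refine ⟨by simpa using hσ, ?_, le_antisymm ?_ fun x hx => ?_⟩
  · rw [Submodule.eq_bot_iff]
    rintro x ⟨hx, hxb⟩
    obtain ⟨t, rfl⟩ := Submodule.mem_span_singleton.1 hxb
    have := (Finsupp.mem_supported' _ _).1 hx σ fun h => h.2 (by simp)
    rw [Finsupp.smul_apply, smul_eq_mul] at this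
    rw [(mul_eq_zero.1 this).resolve_right hbσ, zero_smul]
  · refine sup_le (Finsupp.supported_mono Set.sdiff_subset) ?_
    rw [Submodule.span_le, Set.singleton_subset_iff]
    exact (Finsupp.mem_supported' _ _).2 hb
  · rw [Finsupp.mem_supported'] at hx
    rw [Submodule.mem_sup]
    refine ⟨x - (x σ / b σ) • b, ?_, (x σ / b σ) • b,
      Submodule.smul_mem _ _ (Submodule.mem_span_singleton_self b), sub_add_cancel _ _⟩
    rw [Finsupp.mem_supported']
    intro ρ hρ
    by_cases hρσ : ρ = σ
    · subst hρσ
      simp [div_mul_cancel₀ _ hbσ]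
    · have hρF : ρ ∉ faces Kc c := fun h => hρ ⟨h, by simpa using hρσ⟩
      simp [hx ρ hρF, hb ρ hρF]

lemma isStakeSet_iff_of_bdries_eq_span_singleton {b : Ch k} (hb : b ∈ chains k Kc c)
    (hb0 : b ≠ 0) (hB : bdries k Kc c = k ∙ b) {S : Finset (Finset (Fin 3))} :
    IsStakeSet k Kc c S ↔ ∃ σ ∈ faces Kc c, b σ ≠ 0 ∧ S = {σ} :=
  ⟨IsStakeSet.exists_eq_singleton hb hb0 hB, fun ⟨_, hσ, hbσ, hS⟩ =>
    hS ▸ isStakeSet_singleton hb hB hσ hbσ⟩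

end StakeSets

section Shrubberies

variable {k : Type} [Field k] {Kc : Set (Finset (Fin 3))} {c : ℕ}

lemma isShrubbery_iff_of_faces_eq_singleton {τ : Finset (Fin 3)} (hf : faces Kc c = {τ})
    (hτ : bd k τ ≠ 0) {T : Finset (Finset (Fin 3))} :
    IsShrubbery k Kc c T ↔ T = {τ} := by
  rw [IsShrubbery, map_bdry_chains_of_faces_eq_singleton hf, hf]
  constructor
  · rintro ⟨hsub, -, hspan⟩
    rcases Finset.subset_singleton_iff.1 (by exact_mod_cast hsub) with rfl | rfl
    · refine absurd ?_ hτ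
      simpa [← hspan] using Submodule.mem_span_singleton_self (R := k) (bd k τ)
    · rfl
  · rintro rfl
    refine ⟨by simp, ?_, by simp [bdry_single]⟩
    rw [Finset.coe_singleton]
    exact LinearIndependent.of_subsingleton default (by simpa [bdry_single] using hτ)

lemma bdry_single_of_card_eq_one {σ : Finset (Fin 3)} (hσ : σ.card = 1) :
    bdry k (Finsupp.single σ 1) = Finsupp.single ∅ 1 := by
  obtain ⟨v, rfl⟩ := Finset.card_eq_one.1 hσ
  rw [bdry_single, bd_singleton]

lemma map_bdry_chains_one (hne : (faces Kc 1).Nonempty) :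
    (chains k Kc 1).map (bdry k) = Submodule.span k {Finsupp.single ∅ 1} := by
  rw [chains, sset, Submodule.map_span, Set.image_image,
    Set.image_congr fun σ hσ => bdry_single_of_card_eq_one hσ.2, hne.image_const]

lemma isShrubbery_one_iff (hne : (faces Kc 1).Nonempty) {T : Finset (Finset (Fin 3))} :
    IsShrubbery k Kc 1 T ↔ ∃ σ ∈ faces Kc 1, T = {σ} := by
  rw [IsShrubbery, map_bdry_chains_one hne]
  constructor
  · rintro ⟨hsub, hli, hspan⟩
    have hbd : ∀ σ ∈ T, bdry k (Finsupp.single σ 1) = Finsupp.single ∅ 1 :=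
      fun σ hσ => bdry_single_of_card_eq_one (hsub hσ).2
    obtain ⟨σ, hσ⟩ : T.Nonempty := by
      rw [Finset.nonempty_iff_ne_empty]
      rintro rfl
      simp [eq_comm (a := (⊥ : Submodule k (Ch k)))] at hspan
    refine ⟨σ, hsub hσ, Finset.eq_singleton_iff_unique_mem.2 ⟨hσ, fun τ hτ => ?_⟩⟩
    have : (⟨τ, hτ⟩ : (T : Set (Finset (Fin 3)))) = ⟨σ, hσ⟩ :=
      hli.injective (by simp only [hbd τ hτ, hbd σ hσ])
    exact congrArg Subtype.val this
  · rintro ⟨σ, hσ, rfl⟩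
    refine ⟨by simpa using hσ, ?_, by simp [bdry_single_of_card_eq_one hσ.2]⟩
    rw [Finset.coe_singleton]
    exact LinearIndependent.of_subsingleton default
      (by simp [bdry_single_of_card_eq_one hσ.2])

end Shrubberies

section Links

variable {k : Type} [Field k] {Kc : Set (Finset (Fin 3))} {c : ℕ}

lemma span_sset_singleton (σ : Finset (Fin 3)) :
    Submodule.span k (sset k {σ}) = k ∙ Finsupp.single σ 1 := by
  rw [sset, Set.image_singleton]

lemma circuit_singleton_vertex (t s : Fin 3) :
    circuit k {{t}} {s} = Finsupp.single {s} 1 - Finsupp.single {t} 1 := by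
  refine dite_existsUnique_eq ⟨?_, ?_⟩ fun z ⟨hz, hzt⟩ => ?_
  · rw [map_sub, bdry_single, bdry_single, bd_singleton, bd_singleton, sub_self]
  · simp [span_sset_singleton, Submodule.mem_span_singleton_self]
  · rw [Finset.coe_singleton, span_sset_singleton, Submodule.mem_span_singleton] at hzt
    obtain ⟨x, hx⟩ := hzt
    rw [eq_sub_iff_add_eq, ← eq_sub_iff_add_eq'] at hx
    subst hx
    have h0 := congrArg (· ∅) hz
    simp only [map_sub, map_smul, bdry_single, bd_singleton, Finsupp.sub_apply,
      Finsupp.smul_apply, Finsupp.single_eq_same, smul_eq_mul, mul_one, Finsupp.coe_zero,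
      Pi.zero_apply, sub_eq_zero] at h0
    rw [← h0, one_smul]

lemma shrub_singleton {σ τ : Finset (Fin 3)} (hτσ : bd k τ σ ≠ 0) :
    shrub k {σ} {τ} σ = (bd k τ σ)⁻¹ • Finsupp.single τ 1 := by
  refine dite_existsUnique_eq ⟨?_, ?_, ?_⟩ fun s ⟨hs, hsσ, _⟩ => ?_
  · rw [Finset.coe_singleton, span_sset_singleton]
    exact Submodule.smul_mem _ _ (Submodule.mem_span_singleton_self _)
  · rw [map_smul, bdry_single, Finsupp.smul_apply, smul_eq_mul, inv_mul_cancel₀ hτσ]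
  · simp
  · rw [Finset.coe_singleton, span_sset_singleton, Submodule.mem_span_singleton] at hs
    obtain ⟨x, rfl⟩ := hs
    rw [map_smul, bdry_single, Finsupp.smul_apply, smul_eq_mul] at hsσ
    rw [eq_inv_of_mul_eq_one_left hsσ]

lemma hedgeRim_empty_of_bdries_eq_bot (hB : bdries k Kc c = ⊥) {τ : Finset (Fin 3)}
    (hτ : τ ∈ faces Kc c) : hedgeRim k Kc c ∅ τ = Finsupp.single τ 1 := by
  refine dite_existsUnique_eq ⟨?_, by simp⟩ fun r ⟨_, hr⟩ => ?_
  · simpa [span_sset] using Finsupp.single_mem_supported k (1 : k) hτ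
  · rw [hB, Submodule.mem_bot, sub_eq_zero] at hr
    exact hr.symm

end Links

section LengthTwo

variable {k : Type} [Field k] {I : Set V3} {a : V3} {d : Fin 2 → Fin 3} {c : ℕ}

lemma pt_zero (a : V3) {n : ℕ} (d : Fin n → Fin 3) : pt a d 0 = a := by
  funext x
  simp [pt]

def hedgerow₂ (Sb S T Ta : Finset (Finset (Fin 3))) : HRData 2 :=
  (Sb, ![∅, S, ∅], ![∅, T, ∅], Ta)

lemma isHedgerow_hedgerow₂_iff {Sb S T Ta : Finset (Finset (Fin 3))} :
    IsHedgerow k I a d c (hedgerow₂ Sb S T Ta) ↔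
      IsStakeSet k (K I (pt a d 2)) c Sb ∧ IsStakeSet k (K I (pt a d 1)) (c - 1) S ∧
        IsShrubbery k (K I (pt a d 1)) c T ∧ IsShrubbery k (K I a) (c - 1) Ta := by
  simp [IsHedgerow, hedgerow₂, Fin.forall_fin_succ, and_assoc]

lemma IsHedgerow.eq_hedgerow₂ {h : HRData 2} (hh : IsHedgerow k I a d c h) :
    h = hedgerow₂ h.1 (h.2.1 1) (h.2.2.1 1) h.2.2.2 := by
  obtain ⟨Sb, S, T, Ta⟩ := h
  obtain ⟨-, -, hends, -⟩ := hh
  obtain ⟨hS0, hT0⟩ := hends 0 (Or.inl rfl)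
  obtain ⟨hS2, hT2⟩ := hends 2 (Or.inr rfl)
  simp only [hedgerow₂, Prod.mk.injEq, true_and, and_true]
  constructor <;> funext m <;> fin_cases m <;> simp_all

lemma hedgerow₂_injective :
    Function.Injective fun x : Finset (Finset (Fin 3)) × Finset (Finset (Fin 3)) ×
      Finset (Finset (Fin 3)) × Finset (Finset (Fin 3)) => hedgerow₂ x.1 x.2.1 x.2.2.1 x.2.2.2 := by
  rintro ⟨Sb, S, T, Ta⟩ ⟨Sb', S', T', Ta'⟩ h
  simp [hedgerow₂] at h
  simp [h]

lemma delta_eq_ncard_mul :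
    Delta k I a d c = {S | IsStakeSet k (K I (pt a d 2)) c S}.ncard *
      {S | IsStakeSet k (K I (pt a d 1)) (c - 1) S}.ncard *
      {T | IsShrubbery k (K I (pt a d 1)) c T}.ncard *
      {T | IsShrubbery k (K I a) (c - 1) T}.ncard := by
  have hset : {h | IsHedgerow k I a d c h} = (fun x => hedgerow₂ x.1 x.2.1 x.2.2.1 x.2.2.2) ''
      ({S | IsStakeSet k (K I (pt a d 2)) c S} ×ˢ {S | IsStakeSet k (K I (pt a d 1)) (c - 1) S} ×ˢ
        {T | IsShrubbery k (K I (pt a d 1)) c T} ×ˢ {T | IsShrubbery k (K I a) (c - 1) T}) := by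
    ext h
    constructor
    · intro (hh : IsHedgerow k I a d c h)
      have e := hh.eq_hedgerow₂
      rw [e] at hh
      exact ⟨(h.1, h.2.1 1, h.2.2.1 1, h.2.2.2), isHedgerow_hedgerow₂_iff.1 hh, e.symm⟩
    · rintro ⟨x, hx, rfl⟩
      exact isHedgerow_hedgerow₂_iff.2 hx
  rw [Delta, ← Set.coe_ofPred, Nat.card_coe_set_eq, hset,
    Set.ncard_image_of_injective _ hedgerow₂_injective]
  simp only [Set.ncard_prod, mul_assoc]

-- `tₘ` and `sₘ` are the faces at the lattice point `pt a d m`: the paper's `τ_{2-m}`, `σ_{2-m}`.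
def fence₂ (Sb S T Ta : Finset (Finset (Fin 3))) (t₁ t₂ s₀ s₁ : Finset (Fin 3)) : FData 2 :=
  (hedgerow₂ Sb S T Ta, ![∅, t₁, t₂], ![s₀, s₁, ∅])

lemma isFence_fence₂_iff {σ τ : Finset (Fin 3)} {Sb S T Ta : Finset (Finset (Fin 3))}
    {t₁ t₂ s₀ s₁ : Finset (Fin 3)} :
    IsFence k I a d c σ τ (fence₂ Sb S T Ta t₁ t₂ s₀ s₁) ↔
      IsHedgerow k I a d c (hedgerow₂ Sb S T Ta) ∧
      t₁ ∈ faces (K I (pt a d 1)) c ∧ t₂ ∈ faces (K I (pt a d 2)) c ∧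
      s₀ ∈ faces (K I a) (c - 1) ∧ s₁ ∈ faces (K I (pt a d 1)) (c - 1) ∧
      hedgeRim k (K I (pt a d 2)) c Sb τ t₂ ≠ 0 ∧ s₀ = t₁.erase (d 0) ∧ s₁ = t₂.erase (d 1) ∧
      s₁ ∈ S ∧ shrub k S T s₁ t₁ ≠ 0 ∧ circuit k Ta s₀ σ ≠ 0 := by
  simp [IsFence, fence₂, hedgerow₂, Fin.forall_fin_succ, pt_zero, and_assoc]

lemma IsFence.eq_fence₂ {σ τ : Finset (Fin 3)} {f : FData 2} (hf : IsFence k I a d c σ τ f) :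
    f = fence₂ f.1.1 (f.1.2.1 1) (f.1.2.2.1 1) f.1.2.2.2 (f.2.1 1) (f.2.1 2) (f.2.2 0)
      (f.2.2 1) := by
  obtain ⟨h, t, s⟩ := f
  obtain ⟨hh, -, -, ht0, hs2, -⟩ := hf
  rw [fence₂, ← hh.eq_hedgerow₂]
  simp only [Prod.mk.injEq, true_and]
  constructor <;> funext m <;> fin_cases m <;> simp_all

lemma weight_fence₂ {σ τ : Finset (Fin 3)} {Sb S T Ta : Finset (Finset (Fin 3))}
    {t₁ t₂ s₀ s₁ : Finset (Fin 3)} :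
    weight k I a d c σ τ (fence₂ Sb S T Ta t₁ t₂ s₀ s₁) =
      hedgeRim k (K I (pt a d 2)) c Sb τ t₂ * shrub k S T s₁ t₁ * (bd k t₁ s₀ * bd k t₂ s₁) *
        circuit k Ta s₀ σ := by
  simp [weight, fence₂, hedgerow₂, Fin.prod_univ_succ, bdry_single]

end LengthTwo

section Configuration

variable {k : Type} [Field k] {Kc : Set (Finset (Fin 3))} {i j l : Fin 3}

lemma bd_pair_apply_ne_zero_iff (hij : i ≠ j) {ρ : Finset (Fin 3)} :
    bd k {i, j} ρ ≠ 0 ↔ ρ = {i} ∨ ρ = {j} := by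
  have hne : ({i} : Finset (Fin 3)) ≠ {j} := by simpa using hij
  rw [bd_pair hij]
  by_cases hi : ρ = {i}
  · simp [hi, hne, coeffSign_pair_swap hij, coeffSign_pair_ne_zero hij]
  by_cases hj : ρ = {j}
  · simp [hj, hne.symm, coeffSign_pair_ne_zero hij]
  simp [hi, hj]

lemma bd_pair_ne_zero (hij : i ≠ j) : bd k {i, j} ≠ 0 := fun h0 =>
  (bd_pair_apply_ne_zero_iff hij).2 (Or.inl rfl) (by rw [h0, Finsupp.coe_zero, Pi.zero_apply])

lemma bdries_two_eq_bot_of_hasFacets_triangle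
    (h : hasFacets Kc {{i, j}, {i, l}, {j, l}}) : bdries k Kc 2 = ⊥ :=
  bdries_eq_bot_of_hasFacets h (by simp [Finset.card_le_two])

lemma faces_two_of_hasFacets_edge_vertex (hij : i ≠ j) (h : hasFacets Kc {{i, j}, {l}}) :
    faces Kc 2 = {{i, j}} := by
  rw [faces_eq_of_hasFacets h (by simp [Finset.card_le_two])]
  ext σ
  constructor
  · rintro ⟨rfl | rfl, hσ⟩
    exacts [rfl, absurd hσ (by simp)]
  · rintro rfl
    exact ⟨Or.inl rfl, Finset.card_pair hij⟩

lemma setOf_isStakeSet_of_hasFacets_edge_vertex (hij : i ≠ j) (h : hasFacets Kc {{i, j}, {l}}) :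
    {S | IsStakeSet k Kc 1 S} = {{{i}}, {{j}}} := by
  have hv : ∀ v ∈ ({i, j} : Finset (Fin 3)), {v} ∈ faces Kc 1 := fun v hv => by
    simpa using mem_faces_of_hasFacets h (Set.mem_insert _ _) (Finset.singleton_subset_iff.2 hv)
  have hb : bd k {i, j} ∈ chains k Kc 1 := by
    rw [chains_eq_supported, Finsupp.mem_supported']
    intro ρ hρ
    by_contra hbρ
    rcases (bd_pair_apply_ne_zero_iff hij).1 hbρ with rfl | rfl
    exacts [hρ (hv i (by simp)), hρ (hv j (by simp))]
  ext S
  rw [Set.mem_ofPred_eq, isStakeSet_iff_of_bdries_eq_span_singleton hb (bd_pair_ne_zero hij)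
    (map_bdry_chains_of_faces_eq_singleton (faces_two_of_hasFacets_edge_vertex hij h))]
  constructor
  · rintro ⟨σ, -, hσ, rfl⟩
    rcases (bd_pair_apply_ne_zero_iff hij).1 hσ with rfl | rfl <;> simp
  · rintro (rfl | rfl)
    exacts [⟨{i}, hv i (by simp), (bd_pair_apply_ne_zero_iff hij).2 (Or.inl rfl), rfl⟩,
      ⟨{j}, hv j (by simp), (bd_pair_apply_ne_zero_iff hij).2 (Or.inr rfl), rfl⟩]

lemma setOf_isShrubbery_of_hasFacets_edge_vertex (hij : i ≠ j) (h : hasFacets Kc {{i, j}, {l}}) :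
    {T | IsShrubbery k Kc 2 T} = {{{i, j}}} := by
  ext T
  exact isShrubbery_iff_of_faces_eq_singleton (faces_two_of_hasFacets_edge_vertex hij h)
    (bd_pair_ne_zero hij)

lemma faces_one_of_hasFacets_vertex_pair (h : hasFacets Kc {{i}, {j}}) :
    faces Kc 1 = {{i}, {j}} := by
  rw [faces_eq_of_hasFacets h (by simp), Set.sep_eq_self_iff_mem_true.2 (by simp)]

lemma setOf_isShrubbery_of_hasFacets_vertex_pair (h : hasFacets Kc {{i}, {j}}) :
    {T | IsShrubbery k Kc 1 T} = {{{i}}, {{j}}} := by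
  have hf := faces_one_of_hasFacets_vertex_pair h
  ext T
  rw [Set.mem_ofPred_eq, isShrubbery_one_iff (by simp [hf]), hf]
  simp

end Configuration

section VertexPair

variable {k : Type} [Field k] {i j t w : Fin 3}

lemma erase_pair_eq_singleton (hij : i ≠ j) (ht : t = i ∨ t = j) (hw : w = i ∨ w = j)
    (htw : t ≠ w) : ({i, j} : Finset (Fin 3)).erase w = {t} := by
  rcases ht with rfl | rfl <;> rcases hw with rfl | rfl
  exacts [absurd rfl htw, erase_pair_right hij, erase_pair_left hij, absurd rfl htw]

lemma circuit_erase_pair_apply_ne_zero (hij : i ≠ j) (hw : w = i ∨ w = j) {v : Fin 3}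
    (hv : v = i ∨ v = j) : circuit k {{w}} (({i, j} : Finset (Fin 3)).erase w) {v} ≠ 0 := by
  rcases hw with rfl | rfl <;> rcases hv with rfl | rfl <;>
    simp [erase_pair_left hij, erase_pair_right hij, circuit_singleton_vertex,
      hij, hij.symm]

lemma bd_pair_erase_mul_circuit (hij : i ≠ j) (hw : w = i ∨ w = j) :
    bd k {i, j} (({i, j} : Finset (Fin 3)).erase w) *
      circuit k {{w}} (({i, j} : Finset (Fin 3)).erase w) {i} = coeffSign k j {i, j} := by
  have hne : ({i} : Finset (Fin 3)) ≠ {j} := by simpa using hij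
  rcases hw with rfl | rfl
  · simp [erase_pair_left hij, circuit_singleton_vertex, bd_pair hij, hne,
      coeffSign_pair_swap hij]
  · simp [erase_pair_right hij, circuit_singleton_vertex, bd_pair hij, hne]

end VertexPair

section Path

variable {k : Type} [Field k] {I : Set V3} {a : V3} {d : Fin 2 → Fin 3} {i j l : Fin 3}

lemma delta_eq_four (hij : i ≠ j) (hKb : hasFacets (K I (pt a d 2)) {{i, j}, {i, l}, {j, l}})
    (hKc : hasFacets (K I (pt a d 1)) {{i, j}, {l}}) (hKa : hasFacets (K I a) {{i}, {j}}) :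
    Delta k I a d 2 = 4 := by
  have hB := bdries_two_eq_bot_of_hasFacets_triangle (k := k) hKb
  have hne : ({{i}} : Finset (Finset (Fin 3))) ≠ {{j}} := by simpa using hij
  rw [delta_eq_ncard_mul, show 2 - 1 = 1 from rfl, setOf_isStakeSet_of_bdries_eq_bot hB,
    setOf_isStakeSet_of_hasFacets_edge_vertex hij hKc,
    setOf_isShrubbery_of_hasFacets_edge_vertex hij hKc,
    setOf_isShrubbery_of_hasFacets_vertex_pair hKa]
  simp [Set.ncard_pair hne]

def edgeFence (i j w : Fin 3) : FData 2 :=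
  fence₂ ∅ {{j}} {{i, j}} {{w}} {i, j} {i, j} (({i, j} : Finset (Fin 3)).erase w) {j}

lemma isFence_edgeFence (hij : i ≠ j) (hd1 : d 1 = i) (hd0 : d 0 = i ∨ d 0 = j)
    (hKb : hasFacets (K I (pt a d 2)) {{i, j}, {i, l}, {j, l}})
    (hKc : hasFacets (K I (pt a d 1)) {{i, j}, {l}}) (hKa : hasFacets (K I a) {{i}, {j}})
    {v : Fin 3} (hv : v = i ∨ v = j) : IsFence k I a d 2 {v} {i, j} (edgeFence i j (d 0)) := by
  have hB := bdries_two_eq_bot_of_hasFacets_triangle (k := k) hKb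
  have hijb := pair_mem_faces_of_hasFacets hKb hij (Set.mem_insert _ _)
  have hbj : bd k {i, j} {j} ≠ 0 := (bd_pair_apply_ne_zero_iff hij).2 (Or.inr rfl)
  have hj : {j} ∈ faces (K I (pt a d 1)) 1 :=
    mem_faces_of_hasFacets hKc (Set.mem_insert _ _) (by simp)
  have hS := Set.ext_iff.1 (setOf_isStakeSet_of_hasFacets_edge_vertex (k := k) hij hKc)
  have hT := Set.ext_iff.1 (setOf_isShrubbery_of_hasFacets_edge_vertex (k := k) hij hKc)
  have hTa := Set.ext_iff.1 (setOf_isShrubbery_of_hasFacets_vertex_pair (k := k) hKa)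
  rw [edgeFence, isFence_fence₂_iff, isHedgerow_hedgerow₂_iff,
    faces_two_of_hasFacets_edge_vertex hij hKc, faces_one_of_hasFacets_vertex_pair hKa,
    hedgeRim_empty_of_bdries_eq_bot hB hijb, shrub_singleton hbj, hd1, erase_pair_left hij]
  refine ⟨⟨(isStakeSet_iff_of_bdries_eq_bot hB).2 rfl, (hS _).2 (by simp), (hT _).2 rfl,
    (hTa _).2 ?_⟩, rfl, hijb, ?_, hj, by simp, rfl, rfl, Finset.mem_singleton_self _,
    by simp [hbj], circuit_erase_pair_apply_ne_zero hij hd0 hv⟩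
  all_goals rcases hd0 with h | h <;> simp [h, erase_pair_left hij, erase_pair_right hij]

lemma IsFence.eq_edgeFence (hij : i ≠ j) (hd1 : d 1 = i) (hd0 : d 0 = i ∨ d 0 = j)
    (hKb : hasFacets (K I (pt a d 2)) {{i, j}, {i, l}, {j, l}})
    (hKc : hasFacets (K I (pt a d 1)) {{i, j}, {l}}) (hKa : hasFacets (K I a) {{i}, {j}})
    {v : Fin 3} {f : FData 2} (hf : IsFence k I a d 2 {v} {i, j} f) : f = edgeFence i j (d 0) := by
  have hB := bdries_two_eq_bot_of_hasFacets_triangle (k := k) hKb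
  have hS := Set.ext_iff.1 (setOf_isStakeSet_of_hasFacets_edge_vertex (k := k) hij hKc)
  have hT := Set.ext_iff.1 (setOf_isShrubbery_of_hasFacets_edge_vertex (k := k) hij hKc)
  have hTa := Set.ext_iff.1 (setOf_isShrubbery_of_hasFacets_vertex_pair (k := k) hKa)
  obtain ⟨Sb, S, T, Ta, t₁, t₂, s₀, s₁, rfl⟩ : ∃ Sb S T Ta t₁ t₂ s₀ s₁,
      f = fence₂ Sb S T Ta t₁ t₂ s₀ s₁ := ⟨_, _, _, _, _, _, _, _, hf.eq_fence₂⟩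
  rw [isFence_fence₂_iff, isHedgerow_hedgerow₂_iff] at hf
  obtain ⟨⟨hSb, hSm, hTm, hTam⟩, ht₁, -, -, -, hrim, rfl, rfl, hs₁, -, hcirc⟩ := hf
  obtain rfl := (isStakeSet_iff_of_bdries_eq_bot hB).1 hSb
  rw [hedgeRim_empty_of_bdries_eq_bot hB (pair_mem_faces_of_hasFacets hKb hij (Set.mem_insert _ _)),
    Finsupp.single_apply_ne_zero] at hrim
  obtain rfl := hrim.1
  rw [faces_two_of_hasFacets_edge_vertex hij hKc] at ht₁
  obtain rfl : t₁ = {i, j} := ht₁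
  rw [hd1, erase_pair_left hij] at hs₁ ⊢
  obtain rfl : S = {{j}} := by
    rcases (hS S).1 hSm with rfl | rfl
    · exact absurd (Finset.mem_singleton.1 hs₁) (by simpa using hij.symm)
    · rfl
  obtain rfl : T = {{i, j}} := (hT T).1 hTm
  obtain ⟨t, ht, rfl⟩ : ∃ t, (t = i ∨ t = j) ∧ Ta = {{t}} := by
    rcases (hTa Ta).1 hTam with rfl | rfl
    exacts [⟨i, Or.inl rfl, rfl⟩, ⟨j, Or.inr rfl, rfl⟩]
  obtain rfl : t = d 0 := by
    by_contra htd
    rw [erase_pair_eq_singleton hij ht hd0 htd, circuit_singleton_vertex, sub_self] at hcirc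
    exact hcirc rfl
  rfl

lemma dpath_pair (hij : i ≠ j) (hd1 : d 1 = i) (hd0 : d 0 = i ∨ d 0 = j)
    (hKb : hasFacets (K I (pt a d 2)) {{i, j}, {i, l}, {j, l}})
    (hKc : hasFacets (K I (pt a d 1)) {{i, j}, {l}}) (hKa : hasFacets (K I a) {{i}, {j}})
    {v : Fin 3} (hv : v = i ∨ v = j) :
    Dpath k I a d 2 {v} {i, j} = bd k {i, j} (({i, j} : Finset (Fin 3)).erase (d 0)) *
      circuit k {{d 0}} (({i, j} : Finset (Fin 3)).erase (d 0)) {v} / 4 := by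
  have hbj : bd k {i, j} {j} ≠ 0 := (bd_pair_apply_ne_zero_iff hij).2 (Or.inr rfl)
  have hfences : {f | IsFence k I a d 2 {v} {i, j} f} = {edgeFence i j (d 0)} :=
    Set.ext fun f => ⟨fun hf => hf.eq_edgeFence hij hd1 hd0 hKb hKc hKa,
      fun hf => hf ▸ isFence_edgeFence hij hd1 hd0 hKb hKc hKa hv⟩
  rw [Dpath, delta_eq_four hij hKb hKc hKa, hfences, finsum_mem_singleton, edgeFence,
    weight_fence₂, hedgeRim_empty_of_bdries_eq_bot (bdries_two_eq_bot_of_hasFacets_triangle hKb)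
      (pair_mem_faces_of_hasFacets hKb hij (Set.mem_insert _ _)), shrub_singleton hbj]
  simp only [Finsupp.single_eq_same, Finsupp.smul_apply, smul_eq_mul, mul_one, one_mul,
    Nat.cast_ofNat]
  field_simp

lemma dpath_eq_zero_of_mem (hij : i ≠ j) (hil : i ≠ l) (hjl : j ≠ l) (hd1 : d 1 = i)
    (hKb : hasFacets (K I (pt a d 2)) {{i, j}, {i, l}, {j, l}})
    (hKc : hasFacets (K I (pt a d 1)) {{i, j}, {l}}) {σ τ : Finset (Fin 3)}
    (hτ : τ ∈ faces (K I (pt a d 2)) 2) (hl : l ∈ τ) : Dpath k I a d 2 σ τ = 0 := by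
  have hB := bdries_two_eq_bot_of_hasFacets_triangle (k := k) hKb
  suffices h : ∀ f, ¬IsFence k I a d 2 σ τ f by
    rw [Dpath, show {f | IsFence k I a d 2 σ τ f} = ∅ from Set.eq_empty_of_forall_notMem h,
      finsum_mem_empty, mul_zero]
  intro f hf
  obtain ⟨Sb, S, T, Ta, t₁, t₂, s₀, s₁, rfl⟩ : ∃ Sb S T Ta t₁ t₂ s₀ s₁,
      f = fence₂ Sb S T Ta t₁ t₂ s₀ s₁ := ⟨_, _, _, _, _, _, _, _, hf.eq_fence₂⟩
  rw [isFence_fence₂_iff, isHedgerow_hedgerow₂_iff] at hf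
  obtain ⟨⟨hSb, hS, -, -⟩, -, -, -, -, hrim, -, rfl, hs₁, -⟩ := hf
  obtain rfl := (isStakeSet_iff_of_bdries_eq_bot hB).1 hSb
  rw [hedgeRim_empty_of_bdries_eq_bot hB hτ, Finsupp.single_apply_ne_zero] at hrim
  obtain rfl := hrim.1
  have hl' : l ∈ t₂.erase (d 1) := Finset.mem_erase.2 ⟨hd1 ▸ hil.symm, hl⟩
  rcases (Set.ext_iff.1 (setOf_isStakeSet_of_hasFacets_edge_vertex hij hKc) S).1 hS
    with rfl | rfl <;> rw [Finset.mem_singleton.1 hs₁, Finset.mem_singleton] at hl'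
  exacts [hil hl'.symm, hjl hl'.symm]

end Path

theorem statement10_general (k : Type) [Field k]
    (I : Set V3) (a : V3)
    (i j l : Fin 3) (hij : i ≠ j) (hil : i ≠ l) (hjl : j ≠ l)
    (d : Fin 2 → Fin 3) (hd1 : d 1 = i) (hd0 : d 0 = i ∨ d 0 = j)
    (hKb : hasFacets (K I (pt a d 2)) {{i, j}, {i, l}, {j, l}})
    (hKc : hasFacets (K I (pt a d 1)) {{i, j}, {l}})
    (hKa : hasFacets (K I a) {{i}, {j}}) :
    Dpath k I a d 2 {i} {i, j} = coeffSign k j {i, j} / 4 ∧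
    Dpath k I a d 2 {j} {i, j} = coeffSign k i {i, j} / 4 ∧
    (∀ v : Fin 3, v = i ∨ v = j →
      Dpath k I a d 2 {v} {i, l} = 0 ∧ Dpath k I a d 2 {v} {j, l} = 0) := by
  refine ⟨?_, ?_, fun v _ => ⟨?_, ?_⟩⟩
  · rw [dpath_pair hij hd1 hd0 hKb hKc hKa (Or.inl rfl), bd_pair_erase_mul_circuit hij hd0]
  · have h := bd_pair_erase_mul_circuit (k := k) hij.symm hd0.symm
    rw [Finset.pair_comm j i] at h
    rw [dpath_pair hij hd1 hd0 hKb hKc hKa (Or.inr rfl), h]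
  · exact dpath_eq_zero_of_mem hij hil hjl hd1 hKb hKc
      (pair_mem_faces_of_hasFacets hKb hil (by simp)) (by simp)
  · exact dpath_eq_zero_of_mem hij hil hjl hd1 hKb hKc
      (pair_mem_faces_of_hasFacets hKb hjl (by simp)) (by simp)

/-- Along a length-2 lattice path `λ = (a, b₁, b)` with
`K^b I = ⟨ij,ik,jk⟩`, `K^(b₁) I = ⟨ij,k⟩` and `K^a I = ⟨i,j⟩`, the contribution
of `λ` to the degree-1 sylvan matrix is as displayed. -/
theorem statement10 (k : Type) [Field k] (h2 : (2:k) ≠ 0) (h3 : (3:k) ≠ 0)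
    (I : Set V3) (hI : IsMonomialIdeal I) (a : V3)
    (i j l : Fin 3) (hij : i ≠ j) (hil : i ≠ l) (hjl : j ≠ l)
    (d : Fin 2 → Fin 3) (hd1 : d 1 = i) (hd0 : d 0 = i ∨ d 0 = j)
    (hKb : hasFacets (K I (pt a d 2)) {{i, j}, {i, l}, {j, l}})
    (hKc : hasFacets (K I (pt a d 1)) {{i, j}, {l}})
    (hKa : hasFacets (K I a) {{i}, {j}}) :
    Dpath k I a d 2 {i} {i, j} = coeffSign k j {i, j} / 4 ∧
    Dpath k I a d 2 {j} {i, j} = coeffSign k i {i, j} / 4 ∧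
    (∀ v : Fin 3, v = i ∨ v = j →
      Dpath k I a d 2 {v} {i, l} = 0 ∧ Dpath k I a d 2 {v} {j, l} = 0) :=
  statement10_general k I a i j l hij hil hjl d hd1 hd0 hKb hKc hKa

end Sylvan

end
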